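/- Let f(X) = a_0 + a_1 X + ... + a_n X^n ∈ Z[X] with a_0 a_n ≠ 0. Suppose there exist two distinct primes p and q, two distinct indices j_1, j_2 ∈ {1, ..., n-1} with j_1 + j_2 ≠ n, and two positive integers k_1, k_2 with k_1 > n/j_1 and k_2 > n/j_2, such that: (i) p does not divide a_0, p divides a_i for 0 < i ≤ j_1, p^2 does not divide a_{j_1}, p^{k_1} divides a_i for i > j_1, and p^{k_1+1} does not divide a_n; (ii) q does not divide a_0, q divides a_i for 0 < i ≤ j_2, q^2 does not divide a_{j_2}, q^{k_2} divides a_i for i > j_2, and q^{k_2+1} does not divide a_n; (iii) gcd(k_1 − 1, n − j_1) = gcd(k_2 − 1, n − j_2) = 1. Then f is irreducible over Q. -/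

import Mathlib

/-!
The hypotheses at `p` say that the Newton polygon of `f` has exactly two edges, from `(0, 0)` to
`(j₁, 1)` and from `(j₁, 1)` to `(n, k₁)`; their slopes satisfy `1 / j₁ < (k₁ - 1) / (n - j₁)`
because `k₁ j₁ > n`, and by the gcd condition neither edge has interior lattice points. The Newton
polygon of a product is the Minkowski sum of those of the factors, so a factor of `f` over `ℤ` has
degree `0`, `j₁`, `n - j₁` or `n`; likewise at `q`. As `j₁ ≠ j₂` and `j₁ + j₂ ≠ n`, only the
trivial degrees survive, and Gauss's lemma passes from `ℤ` to `ℚ`.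

The Minkowski sum is only used through the ends of the face cut out by a supporting line of given
slope: these ends add up under multiplication, by the usual Gauss-lemma argument for the weighted
valuation.
-/

open Polynomial Finset

section padicValInt

variable {p : ℕ} [Fact p.Prime]

lemma le_padicValInt_of_pow_dvd {x : ℤ} {m : ℕ} (hx : x ≠ 0) (h : (p : ℤ) ^ m ∣ x) :
    m ≤ padicValInt p x :=
  ((padicValInt_dvd_iff m x).mp h).resolve_left hx

lemma padicValInt_eq_of_pow_dvd_of_not_pow_succ_dvd {x : ℤ} {m : ℕ} (h : (p : ℤ) ^ m ∣ x)
    (h' : ¬(p : ℤ) ^ (m + 1) ∣ x) : padicValInt p x = m := by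
  have hx : x ≠ 0 := by rintro rfl; exact h' (dvd_zero _)
  have hlt : ¬m + 1 ≤ padicValInt p x := fun hle => h' ((padicValInt_dvd_iff _ _).mpr (.inr hle))
  have := le_padicValInt_of_pow_dvd hx h
  omega

lemma padicValInt_add_eq_of_pow_dvd {x y : ℤ} (hx : x ≠ 0)
    (hy : (p : ℤ) ^ (padicValInt p x + 1) ∣ y) :
    x + y ≠ 0 ∧ padicValInt p (x + y) = padicValInt p x := by
  have hnot : ¬(p : ℤ) ^ (padicValInt p x + 1) ∣ x + y := fun h => by
    have := le_padicValInt_of_pow_dvd hx (by simpa using dvd_sub h hy)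
    omega
  refine ⟨fun h0 => hnot (h0 ▸ dvd_zero _), padicValInt_eq_of_pow_dvd_of_not_pow_succ_dvd ?_ hnot⟩
  exact dvd_add (padicValInt_dvd x) ((pow_dvd_pow _ (Nat.le_succ _)).trans hy)

end padicValInt

lemma Int.eq_zero_or_eq_of_dvd_of_le {x b : ℤ} (hdvd : b ∣ x) (hx : 0 ≤ x) (hxb : x ≤ b) :
    x = 0 ∨ x = b :=
  hxb.lt_or_eq.imp_left fun hlt => Int.eq_zero_of_dvd_of_nonneg_of_lt hx hlt hdvd

namespace Polynomial

section CoeffMul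

variable {p : ℕ} [Fact p.Prime] {g h : ℤ[X]}

lemma exists_padicValInt_add_le_coeff_mul {l : ℕ} (hl : (g * h).coeff l ≠ 0) :
    ∃ i j, i + j = l ∧ g.coeff i ≠ 0 ∧ h.coeff j ≠ 0 ∧
      padicValInt p (g.coeff i) + padicValInt p (h.coeff j) ≤ padicValInt p ((g * h).coeff l) := by
  by_contra! H
  have hdvd : (p : ℤ) ^ (padicValInt p ((g * h).coeff l) + 1) ∣ (g * h).coeff l := by
    conv_rhs => rw [coeff_mul]
    refine dvd_sum fun x hx => (padicValInt_dvd_iff _ _).mpr ?_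
    by_cases h0 : g.coeff x.1 * h.coeff x.2 = 0
    · exact .inl h0
    · rw [padicValInt.mul (left_ne_zero_of_mul h0) (right_ne_zero_of_mul h0)]
      exact .inr (H x.1 x.2 (mem_antidiagonal.mp hx) (left_ne_zero_of_mul h0)
        (right_ne_zero_of_mul h0))
  have := le_padicValInt_of_pow_dvd hl hdvd
  omega

lemma padicValInt_coeff_mul_of_forall_lt {i₀ j₀ : ℕ} (hg : g.coeff i₀ ≠ 0) (hh : h.coeff j₀ ≠ 0)
    (hlt : ∀ i j, i + j = i₀ + j₀ → (i, j) ≠ (i₀, j₀) → g.coeff i ≠ 0 → h.coeff j ≠ 0 →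
      padicValInt p (g.coeff i₀) + padicValInt p (h.coeff j₀) <
        padicValInt p (g.coeff i) + padicValInt p (h.coeff j)) :
    (g * h).coeff (i₀ + j₀) ≠ 0 ∧ padicValInt p ((g * h).coeff (i₀ + j₀)) =
      padicValInt p (g.coeff i₀) + padicValInt p (h.coeff j₀) := by
  have hmem : (i₀, j₀) ∈ antidiagonal (i₀ + j₀) := mem_antidiagonal.mpr rfl
  rw [coeff_mul, ← add_sum_erase _ _ hmem, ← padicValInt.mul hg hh]
  refine padicValInt_add_eq_of_pow_dvd (mul_ne_zero hg hh)
    (dvd_sum fun x hx => (padicValInt_dvd_iff _ _).mpr ?_)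
  obtain ⟨hne, hx⟩ := mem_erase.mp hx
  by_cases h0 : g.coeff x.1 * h.coeff x.2 = 0
  · exact .inl h0
  · rw [padicValInt.mul hg hh, padicValInt.mul (left_ne_zero_of_mul h0) (right_ne_zero_of_mul h0)]
    exact .inr (hlt x.1 x.2 (mem_antidiagonal.mp hx) hne (left_ne_zero_of_mul h0)
      (right_ne_zero_of_mul h0))

end CoeffMul

section NewtonFace

/-- `b` times the height of the point `(i, v_p(g_i))` above the line of slope `a / b` through the
origin. -/
def newtonWeight (p : ℕ) (a : ℤ) (b : ℕ) (g : ℤ[X]) (i : ℕ) : ℤ :=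
  b * padicValInt p (g.coeff i) - a * i

def faceKey (p : ℕ) (a : ℤ) (b : ℕ) (ε : ℤ) (g : ℤ[X]) (i : ℕ) : ℤ ×ₗ ℤ :=
  toLex (newtonWeight p a b g i, ε * i)

/-- The points of minimal weight form the face of the Newton polygon of `g` cut out by a supporting
line of slope `a / b`; breaking ties by `ε * i` selects its left end (`ε = 1`) or its right end
(`ε = -1`). -/
def IsFaceEnd (p : ℕ) (a : ℤ) (b : ℕ) (ε : ℤ) (g : ℤ[X]) (i : ℕ) : Prop :=
  i ∈ g.support ∧ ∀ l ∈ g.support, faceKey p a b ε g i ≤ faceKey p a b ε g l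

variable {p : ℕ} {a : ℤ} {b : ℕ} {ε ε' : ℤ} {g h : ℤ[X]} {i i' : ℕ}

lemma exists_isFaceEnd (p : ℕ) (a : ℤ) (b : ℕ) (ε : ℤ) (hg : g ≠ 0) :
    ∃ i, IsFaceEnd p a b ε g i :=
  exists_min_image g.support _ (nonempty_support_iff.mpr hg)

namespace IsFaceEnd

lemma le_natDegree (hi : IsFaceEnd p a b ε g i) : i ≤ g.natDegree :=
  le_natDegree_of_mem_supp i hi.1

lemma weight_le (hi : IsFaceEnd p a b ε g i) {l : ℕ} (hl : l ∈ g.support) :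
    newtonWeight p a b g i ≤ newtonWeight p a b g l :=
  (Prod.Lex.toLex_le_toLex'.mp (hi.2 l hl)).1

lemma weight_eq (hi : IsFaceEnd p a b ε g i) (hi' : IsFaceEnd p a b ε' g i') :
    newtonWeight p a b g i = newtonWeight p a b g i' :=
  (hi.weight_le hi'.1).antisymm (hi'.weight_le hi.1)

lemma faceKey_lt (hε : ε ≠ 0) (hi : IsFaceEnd p a b ε g i) {l : ℕ} (hl : l ∈ g.support)
    (hli : l ≠ i) : faceKey p a b ε g i < faceKey p a b ε g l := by
  refine (hi.2 l hl).lt_of_ne fun hkey => hli ?_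
  simp only [faceKey, toLex_inj, Prod.mk.injEq, mul_eq_mul_left_iff, Nat.cast_inj] at hkey
  exact (hkey.2.resolve_right hε).symm

lemma unique (hε : ε ≠ 0) (hi : IsFaceEnd p a b ε g i) (hi' : IsFaceEnd p a b ε g i') : i = i' := by
  by_contra hne
  exact (hi.faceKey_lt hε hi'.1 (Ne.symm hne)).not_ge (hi'.2 i hi.1)

lemma le (hi : IsFaceEnd p a b 1 g i) (hi' : IsFaceEnd p a b (-1) g i') : i ≤ i' := by
  have := (Prod.Lex.toLex_le_toLex'.mp (hi.2 i' hi'.1)).2 (hi.weight_eq hi')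
  exact_mod_cast (by simpa using this : (i : ℤ) ≤ i')

lemma dvd_sub (hab : IsCoprime a b) (hi : IsFaceEnd p a b ε g i)
    (hi' : IsFaceEnd p a b ε' g i') : (b : ℤ) ∣ (i' : ℤ) - i := by
  have := hi.weight_eq hi'
  unfold newtonWeight at this
  exact hab.symm.dvd_of_dvd_mul_left
    ⟨padicValInt p (g.coeff i') - padicValInt p (g.coeff i), by linear_combination this⟩

lemma le_of_slope_lt {a' : ℤ} {b' : ℕ} (hslope : a * b' < a' * b)
    (hi : IsFaceEnd p a b (-1) g i) (hi' : IsFaceEnd p a' b' 1 g i') : i ≤ i' := by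
  by_contra! hlt
  have h₁ := hi.weight_le hi'.1
  have h₂ := hi'.weight_le hi.1
  unfold newtonWeight at h₁ h₂
  have hlt' : (0 : ℤ) < i - i' := by omega
  nlinarith [mul_le_mul_of_nonneg_left h₁ (Nat.cast_nonneg (α := ℤ) b'),
    mul_le_mul_of_nonneg_left h₂ (Nat.cast_nonneg (α := ℤ) b), mul_lt_mul_of_pos_right hslope hlt']

lemma faceKey_add (p : ℕ) (a : ℤ) (b : ℕ) (ε : ℤ) (g h : ℤ[X]) (i j : ℕ) :
    faceKey p a b ε g i + faceKey p a b ε h j =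
      toLex ((b : ℤ) * (padicValInt p (g.coeff i) + padicValInt p (h.coeff j) : ℕ) -
        a * (i + j : ℕ), ε * (i + j : ℕ)) := by
  simp only [faceKey, newtonWeight, ← toLex_add, Prod.mk_add_mk]
  push_cast
  ring_nf

lemma mul [Fact p.Prime] (hε : ε ≠ 0) {j : ℕ} (hi : IsFaceEnd p a b ε g i)
    (hj : IsFaceEnd p a b ε h j) : IsFaceEnd p a b ε (g * h) (i + j) := by
  -- `(i, j)` is the only key-minimizing pair on its antidiagonal, so its term has the strictly
  -- smallest valuation in the coefficient of `X ^ (i + j)`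
  have hstrict : ∀ i' j', i' + j' = i + j → (i', j') ≠ (i, j) → g.coeff i' ≠ 0 → h.coeff j' ≠ 0 →
      padicValInt p (g.coeff i) + padicValInt p (h.coeff j) <
        padicValInt p (g.coeff i') + padicValInt p (h.coeff j') := by
    intro i' j' hsum hne hi' hj'
    have hlt : faceKey p a b ε g i + faceKey p a b ε h j <
        faceKey p a b ε g i' + faceKey p a b ε h j' := by
      rcases eq_or_ne i' i with rfl | hii
      · exact add_lt_add_of_le_of_lt le_rfl
          (hj.faceKey_lt hε (mem_support_iff.mpr hj') fun h => hne (by rw [h]))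
      · exact add_lt_add_of_lt_of_le (hi.faceKey_lt hε (mem_support_iff.mpr hi') hii)
          (hj.2 j' (mem_support_iff.mpr hj'))
    rw [faceKey_add, faceKey_add, hsum, Prod.Lex.toLex_lt_toLex] at hlt
    simp only [lt_self_iff_false, and_false, or_false, sub_lt_sub_iff_right] at hlt
    exact_mod_cast lt_of_mul_lt_mul_left hlt (Nat.cast_nonneg b)
  obtain ⟨hne, hval⟩ := padicValInt_coeff_mul_of_forall_lt (p := p) (mem_support_iff.mp hi.1)
    (mem_support_iff.mp hj.1) hstrict
  have hkey : faceKey p a b ε (g * h) (i + j) = faceKey p a b ε g i + faceKey p a b ε h j := by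
    rw [faceKey_add, ← hval]
    simp only [faceKey, newtonWeight]
  refine ⟨mem_support_iff.mpr hne, fun l hl => ?_⟩
  obtain ⟨i', j', rfl, hi', hj', hle⟩ := exists_padicValInt_add_le_coeff_mul (p := p)
    (mem_support_iff.mp hl)
  calc faceKey p a b ε (g * h) (i + j)
      = faceKey p a b ε g i + faceKey p a b ε h j := hkey
    _ ≤ faceKey p a b ε g i' + faceKey p a b ε h j' :=
        add_le_add (hi.2 i' (mem_support_iff.mpr hi')) (hj.2 j' (mem_support_iff.mpr hj'))
    _ ≤ faceKey p a b ε (g * h) (i' + j') := by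
        rw [faceKey_add, faceKey, newtonWeight, Prod.Lex.toLex_le_toLex']
        exact ⟨sub_le_sub_right (mul_le_mul_of_nonneg_left (by exact_mod_cast hle)
          (Nat.cast_nonneg b)) _, fun _ => le_rfl⟩

end IsFaceEnd

lemma isFaceEnd_of_forall_lt (hi : i ∈ g.support) (hi' : i' ∈ g.support) (hii' : i ≤ i')
    (heq : newtonWeight p a b g i = newtonWeight p a b g i')
    (hlt : ∀ l ∈ g.support, l ≠ i → l ≠ i' → newtonWeight p a b g i < newtonWeight p a b g l) :
    IsFaceEnd p a b 1 g i ∧ IsFaceEnd p a b (-1) g i' := by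
  refine ⟨⟨hi, fun l hl => ?_⟩, ⟨hi', fun l hl => ?_⟩⟩ <;>
    simp only [faceKey, Prod.Lex.toLex_le_toLex']
  · rcases eq_or_ne l i with rfl | hli
    · exact ⟨le_rfl, fun _ => le_rfl⟩
    rcases eq_or_ne l i' with rfl | hli'
    · exact ⟨heq.le, fun _ => by simpa using hii'⟩
    exact ⟨(hlt l hl hli hli').le, fun h => absurd h (hlt l hl hli hli').ne⟩
  · rcases eq_or_ne l i' with rfl | hli'
    · exact ⟨le_rfl, fun _ => le_rfl⟩
    rcases eq_or_ne l i with rfl | hli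
    · exact ⟨heq.ge, fun _ => by simpa using hii'⟩
    exact ⟨heq ▸ (hlt l hl hli hli').le, fun h => absurd h (heq ▸ (hlt l hl hli hli').ne)⟩

/-- The two edges have no interior lattice points, so the Newton polygon of a factor can only be
made of whole edges. -/
theorem natDegree_eq_of_two_edges [Fact p.Prime] {a₁ a₂ : ℤ} {b₁ b₂ : ℕ}
    (hslope : a₁ * b₂ < a₂ * b₁) (hcop₁ : IsCoprime a₁ b₁) (hcop₂ : IsCoprime a₂ b₂)
    (hdeg : (g * h).natDegree = b₁ + b₂)
    (h₀ : IsFaceEnd p a₁ b₁ 1 (g * h) 0) (h₁ : IsFaceEnd p a₁ b₁ (-1) (g * h) b₁)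
    (h₁' : IsFaceEnd p a₂ b₂ 1 (g * h) b₁) (h₂ : IsFaceEnd p a₂ b₂ (-1) (g * h) (b₁ + b₂)) :
    g.natDegree = 0 ∨ g.natDegree = b₁ ∨ g.natDegree = b₂ ∨ g.natDegree = b₁ + b₂ := by
  have hgh : g * h ≠ 0 := by rintro h0; simpa [h0] using h₀.1
  have hg := left_ne_zero_of_mul hgh
  have hh := right_ne_zero_of_mul hgh
  obtain ⟨s₀, hs₀⟩ := exists_isFaceEnd p a₁ b₁ 1 hg
  obtain ⟨s₁, hs₁⟩ := exists_isFaceEnd p a₁ b₁ (-1) hg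
  obtain ⟨s₁', hs₁'⟩ := exists_isFaceEnd p a₂ b₂ 1 hg
  obtain ⟨s₂, hs₂⟩ := exists_isFaceEnd p a₂ b₂ (-1) hg
  obtain ⟨t₀, ht₀⟩ := exists_isFaceEnd p a₁ b₁ 1 hh
  obtain ⟨t₁, ht₁⟩ := exists_isFaceEnd p a₁ b₁ (-1) hh
  obtain ⟨t₁', ht₁'⟩ := exists_isFaceEnd p a₂ b₂ 1 hh
  obtain ⟨t₂, ht₂⟩ := exists_isFaceEnd p a₂ b₂ (-1) hh
  have e₀ : s₀ + t₀ = 0 := (hs₀.mul one_ne_zero ht₀).unique one_ne_zero h₀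
  have e₁ : s₁ + t₁ = b₁ := (hs₁.mul (by norm_num) ht₁).unique (by norm_num) h₁
  have e₁' : s₁' + t₁' = b₁ := (hs₁'.mul one_ne_zero ht₁').unique one_ne_zero h₁'
  have e₂ : s₂ + t₂ = b₁ + b₂ := (hs₂.mul (by norm_num) ht₂).unique (by norm_num) h₂
  have hdeg' : g.natDegree + h.natDegree = b₁ + b₂ := by rw [← natDegree_mul hg hh, hdeg]
  have := hs₁.le_of_slope_lt hslope hs₁'
  have := ht₁.le_of_slope_lt hslope ht₁'
  have := hs₂.le_natDegree
  have := ht₂.le_natDegree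
  have := hs₁'.le hs₂
  have := ht₀.le ht₁
  have := ht₁'.le ht₂
  -- now `s₀ = 0`, `s₁ = s₁'` and `s₂ = deg g`, while `0 ≤ s₁ - s₀ ≤ b₁` and `0 ≤ s₂ - s₁' ≤ b₂`
  rcases Int.eq_zero_or_eq_of_dvd_of_le (hs₀.dvd_sub hcop₁ hs₁) (by omega) (by omega)
    with hd₁ | hd₁ <;>
    rcases Int.eq_zero_or_eq_of_dvd_of_le (hs₁'.dvd_sub hcop₂ hs₂) (by omega) (by omega)
      with hd₂ | hd₂ <;>
    omega

end NewtonFace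

section TwoEdges

variable {p : ℕ} {f : ℤ[X]} {n j k : ℕ}

lemma isFaceEnd_first_edge (hj : 0 < j) (hkj : n < k * j) (h0 : 0 ∈ f.support)
    (hj0 : j ∈ f.support) (hv0 : padicValInt p (f.coeff 0) = 0)
    (hvj : padicValInt p (f.coeff j) = 1)
    (hlow : ∀ l ∈ f.support, 0 < l → l < j → 1 ≤ padicValInt p (f.coeff l))
    (hhigh : ∀ l ∈ f.support, j < l → l ≤ n ∧ k ≤ padicValInt p (f.coeff l)) :
    IsFaceEnd p 1 j 1 f 0 ∧ IsFaceEnd p 1 j (-1) f j := by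
  refine isFaceEnd_of_forall_lt h0 hj0 hj.le (by simp [newtonWeight, hv0, hvj]) ?_
  intro l hl hl0 hlj
  simp only [newtonWeight, hv0]
  push_cast
  rcases lt_or_gt_of_ne hlj with hlt | hgt
  · have hv : (1 : ℤ) ≤ padicValInt p (f.coeff l) := by exact_mod_cast hlow l hl (by omega) hlt
    have : (l : ℤ) < j := by exact_mod_cast hlt
    nlinarith
  · obtain ⟨hln, hvk⟩ := hhigh l hl hgt
    have : (l : ℤ) ≤ n := by exact_mod_cast hln
    have : (k : ℤ) ≤ padicValInt p (f.coeff l) := by exact_mod_cast hvk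
    have : (n : ℤ) < k * j := by exact_mod_cast hkj
    nlinarith

lemma isFaceEnd_second_edge (hjn : j < n) (hkj : n < k * j) (hj0 : j ∈ f.support)
    (hn0 : n ∈ f.support) (hvj : padicValInt p (f.coeff j) = 1)
    (hvn : padicValInt p (f.coeff n) = k)
    (hlow : ∀ l ∈ f.support, 0 < l → l < j → 1 ≤ padicValInt p (f.coeff l))
    (hhigh : ∀ l ∈ f.support, j < l → l ≤ n ∧ k ≤ padicValInt p (f.coeff l)) :
    IsFaceEnd p (k - 1) (n - j) 1 f j ∧ IsFaceEnd p (k - 1) (n - j) (-1) f n := by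
  have hjn' : (j : ℤ) < n := by exact_mod_cast hjn
  have hkj' : (n : ℤ) < k * j := by exact_mod_cast hkj
  have hk : (1 : ℤ) < k := by nlinarith
  refine isFaceEnd_of_forall_lt hj0 hn0 hjn.le ?_ ?_
  · simp only [newtonWeight, hvj, hvn]
    push_cast [hjn.le]
    ring
  intro l hl hlj hln
  simp only [newtonWeight, hvj]
  push_cast [hjn.le]
  rcases Nat.eq_zero_or_pos l with rfl | hl0
  · have : (0 : ℤ) ≤ padicValInt p (f.coeff 0) := Nat.cast_nonneg _
    push_cast
    nlinarith
  rcases lt_or_gt_of_ne hlj with hlt | hgt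
  · have : (1 : ℤ) ≤ padicValInt p (f.coeff l) := by exact_mod_cast hlow l hl hl0 hlt
    have : (l : ℤ) < j := by exact_mod_cast hlt
    nlinarith
  · obtain ⟨hln', hvk⟩ := hhigh l hl hgt
    have : (l : ℤ) < n := by exact_mod_cast lt_of_le_of_ne hln' hln
    have : (j : ℤ) < l := by exact_mod_cast hgt
    have : (k : ℤ) ≤ padicValInt p (f.coeff l) := by exact_mod_cast hvk
    nlinarith

theorem natDegree_eq_of_mul_eq_of_coeff_dvd [Fact p.Prime] (hj : 0 < j) (hjn : j < n)
    (hkj : n < k * j) (hdeg : f.natDegree = n) (h0 : ¬(p : ℤ) ∣ f.coeff 0)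
    (hlow : ∀ i, 0 < i → i ≤ j → (p : ℤ) ∣ f.coeff i) (hj2 : ¬(p : ℤ) ^ 2 ∣ f.coeff j)
    (hhigh : ∀ i, j < i → i ≤ n → (p : ℤ) ^ k ∣ f.coeff i)
    (hn : ¬(p : ℤ) ^ (k + 1) ∣ f.coeff n) (hcop : Nat.Coprime (k - 1) (n - j)) {g h : ℤ[X]}
    (hf : f = g * h) :
    g.natDegree = 0 ∨ g.natDegree = j ∨ g.natDegree = n - j ∨ g.natDegree = n := by
  have hmem : ∀ {i m : ℕ}, ¬(p : ℤ) ^ m ∣ f.coeff i → i ∈ f.support := fun h =>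
    mem_support_iff.mpr fun h0 => h (h0 ▸ dvd_zero _)
  have hv0 : padicValInt p (f.coeff 0) = 0 := padicValInt.eq_zero_of_not_dvd h0
  have hvj : padicValInt p (f.coeff j) = 1 :=
    padicValInt_eq_of_pow_dvd_of_not_pow_succ_dvd (by simpa using hlow j hj le_rfl) hj2
  have hvn : padicValInt p (f.coeff n) = k :=
    padicValInt_eq_of_pow_dvd_of_not_pow_succ_dvd (hhigh n hjn le_rfl) hn
  have hvlow : ∀ l ∈ f.support, 0 < l → l < j → 1 ≤ padicValInt p (f.coeff l) :=
    fun l hl hl0 hlj =>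
      le_padicValInt_of_pow_dvd (mem_support_iff.mp hl) (by simpa using hlow l hl0 hlj.le)
  have hvhigh : ∀ l ∈ f.support, j < l → l ≤ n ∧ k ≤ padicValInt p (f.coeff l) := fun l hl hjl =>
    have hln := hdeg ▸ le_natDegree_of_mem_supp l hl
    ⟨hln, le_padicValInt_of_pow_dvd (mem_support_iff.mp hl) (hhigh l hjl hln)⟩
  obtain ⟨h₀, h₁⟩ := isFaceEnd_first_edge hj hkj (hmem (m := 1) (by simpa using h0)) (hmem hj2)
    hv0 hvj hvlow hvhigh
  obtain ⟨h₁', h₂⟩ := isFaceEnd_second_edge hjn hkj (hmem hj2) (hmem hn) hvj hvn hvlow hvhigh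
  subst hf
  obtain ⟨m, rfl⟩ : ∃ m, n = j + m := ⟨n - j, by omega⟩
  simp only [Nat.add_sub_cancel_left] at h₁' h₂ hcop ⊢
  have hk : (k : ℤ) - 1 = (k - 1 : ℕ) := by
    have : 1 ≤ k := Nat.pos_of_ne_zero (by rintro rfl; omega)
    push_cast [this]
    ring
  have hslope : (1 : ℤ) * m < (k - 1) * j := by
    have : ((j + m : ℕ) : ℤ) < k * j := by exact_mod_cast hkj
    push_cast at this
    linarith
  exact natDegree_eq_of_two_edges hslope isCoprime_one_left
    (hk ▸ Nat.isCoprime_iff_coprime.mpr hcop) hdeg h₀ h₁ h₁' h₂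

end TwoEdges

lemma coeff_sum_range_C_mul_X_pow {R : Type*} [Semiring R] (a : ℕ → R) {n m : ℕ} (hm : m ≤ n) :
    (∑ i ∈ range (n + 1), C (a i) * X ^ i).coeff m = a m := by
  simp [Nat.lt_succ_of_le hm]

lemma natDegree_sum_range_C_mul_X_pow_le {R : Type*} [Semiring R] (a : ℕ → R) (n : ℕ) :
    (∑ i ∈ range (n + 1), C (a i) * X ^ i).natDegree ≤ n :=
  natDegree_sum_le_of_forall_le _ _ fun _ hi =>
    (natDegree_C_mul_X_pow_le _ _).trans (Nat.lt_succ_iff.mp (mem_range.mp hi))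

theorem irreducible_map_cast_of_forall_natDegree_eq_zero {f : ℤ[X]} (hf : 0 < f.natDegree)
    (hfac : ∀ g h : ℤ[X], f = g * h → g.natDegree = 0 ∨ h.natDegree = 0) :
    Irreducible (f.map (Int.castRingHom ℚ)) := by
  have hc : f.content ≠ 0 := by
    rw [Ne, content_eq_zero_iff]; rintro rfl; simp at hf
  have hprim := f.isPrimitive_primPart
  have hunit : ∀ g : ℤ[X], g ∣ f.primPart → g.natDegree = 0 → IsUnit g := fun g hg hg0 => by
    rw [eq_C_of_natDegree_eq_zero hg0] at hg ⊢
    exact isUnit_C.mpr (hprim _ hg)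
  have hirr : Irreducible f.primPart := by
    refine ⟨fun hu => by rw [← natDegree_primPart, natDegree_eq_zero_of_isUnit hu] at hf; omega,
      fun g h hgh => ?_⟩
    have := hfac (C f.content * g) h (by rw [mul_assoc, ← hgh, ← eq_C_content_mul_primPart])
    rw [natDegree_C_mul hc] at this
    exact this.imp (hunit g (Dvd.intro h hgh.symm)) (hunit h (Dvd.intro_left g hgh.symm))
  rw [f.eq_C_content_mul_primPart, Polynomial.map_mul, map_C, irreducible_isUnit_mul
    (isUnit_C.mpr (by simpa using hc))]
  exact (IsPrimitive.Int.irreducible_iff_irreducible_map_cast hprim).mp hirr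

end Polynomial

theorem corollary_1_46_general (n : ℕ) (a : ℕ → ℤ)
    (han : a n ≠ 0)
    (p q : ℕ) (hp : p.Prime) (hq : q.Prime)
    (j₁ j₂ : ℕ) (hj1 : 1 ≤ j₁) (hj1n : j₁ ≤ n - 1) (hj2 : 1 ≤ j₂) (hj2n : j₂ ≤ n - 1)
    (hjne : j₁ ≠ j₂) (hjsum : j₁ + j₂ ≠ n)
    (k₁ k₂ : ℕ)
    (hk1j : k₁ * j₁ > n) (hk2j : k₂ * j₂ > n)
    (hp0 : ¬ (p : ℤ) ∣ a 0)
    (hp1 : ∀ i, 0 < i → i ≤ j₁ → (p : ℤ) ∣ a i)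
    (hp2 : ¬ (p : ℤ)^2 ∣ a j₁)
    (hp3 : ∀ i, j₁ < i → i ≤ n → (p : ℤ)^k₁ ∣ a i)
    (hp4 : ¬ (p : ℤ)^(k₁+1) ∣ a n)
    (hq0 : ¬ (q : ℤ) ∣ a 0)
    (hq1 : ∀ i, 0 < i → i ≤ j₂ → (q : ℤ) ∣ a i)
    (hq2 : ¬ (q : ℤ)^2 ∣ a j₂)
    (hq3 : ∀ i, j₂ < i → i ≤ n → (q : ℤ)^k₂ ∣ a i)
    (hq4 : ¬ (q : ℤ)^(k₂+1) ∣ a n)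
    (hg1 : Nat.gcd (k₁ - 1) (n - j₁) = 1)
    (hg2 : Nat.gcd (k₂ - 1) (n - j₂) = 1) :
    Irreducible ((∑ i ∈ range (n+1), C (a i) * X ^ i).map (Int.castRingHom ℚ)) := by
  have := Fact.mk hp
  have := Fact.mk hq
  set f : ℤ[X] := ∑ i ∈ range (n + 1), C (a i) * X ^ i
  have hcoeff : ∀ i ≤ n, f.coeff i = a i := fun i hi => coeff_sum_range_C_mul_X_pow a hi
  have hdeg : f.natDegree = n := natDegree_eq_of_le_of_coeff_ne_zero
    (natDegree_sum_range_C_mul_X_pow_le a n) (by rwa [hcoeff n le_rfl])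
  refine irreducible_map_cast_of_forall_natDegree_eq_zero (by omega) fun g h hgh => ?_
  have hp_deg := natDegree_eq_of_mul_eq_of_coeff_dvd (p := p) (by omega) (by omega) hk1j hdeg
    (hcoeff 0 (by omega) ▸ hp0) (fun i hi hij => hcoeff i (by omega) ▸ hp1 i hi hij)
    (hcoeff j₁ (by omega) ▸ hp2) (fun i hji hin => hcoeff i hin ▸ hp3 i hji hin)
    (hcoeff n le_rfl ▸ hp4) hg1 hgh
  have hq_deg := natDegree_eq_of_mul_eq_of_coeff_dvd (p := q) (by omega) (by omega) hk2j hdeg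
    (hcoeff 0 (by omega) ▸ hq0) (fun i hi hij => hcoeff i (by omega) ▸ hq1 i hi hij)
    (hcoeff j₂ (by omega) ▸ hq2) (fun i hji hin => hcoeff i hin ▸ hq3 i hji hin)
    (hcoeff n le_rfl ▸ hq4) hg2 hgh
  clear hp0 hp1 hp2 hp3 hp4 hq0 hq1 hq2 hq3 hq4
  have hgh0 : g * h ≠ 0 := fun h0 => by rw [← hgh] at h0; rw [h0, natDegree_zero] at hdeg; omega
  have hsum : g.natDegree + h.natDegree = n := by
    rw [← natDegree_mul (left_ne_zero_of_mul hgh0) (right_ne_zero_of_mul hgh0), ← hgh, hdeg]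
  omega

theorem corollary_1_46 (n : ℕ) (hn : 1 ≤ n) (a : ℕ → ℤ)
    (ha0 : a 0 ≠ 0) (han : a n ≠ 0)
    (p q : ℕ) (hp : p.Prime) (hq : q.Prime) (hpq : p ≠ q)
    (j₁ j₂ : ℕ) (hj1 : 1 ≤ j₁) (hj1n : j₁ ≤ n - 1) (hj2 : 1 ≤ j₂) (hj2n : j₂ ≤ n - 1)
    (hjne : j₁ ≠ j₂) (hjsum : j₁ + j₂ ≠ n)
    (k₁ k₂ : ℕ) (hk1 : 0 < k₁) (hk2 : 0 < k₂)
    (hk1j : k₁ * j₁ > n) (hk2j : k₂ * j₂ > n)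
    (hp0 : ¬ (p : ℤ) ∣ a 0)
    (hp1 : ∀ i, 0 < i → i ≤ j₁ → (p : ℤ) ∣ a i)
    (hp2 : ¬ (p : ℤ)^2 ∣ a j₁)
    (hp3 : ∀ i, j₁ < i → i ≤ n → (p : ℤ)^k₁ ∣ a i)
    (hp4 : ¬ (p : ℤ)^(k₁+1) ∣ a n)
    (hq0 : ¬ (q : ℤ) ∣ a 0)
    (hq1 : ∀ i, 0 < i → i ≤ j₂ → (q : ℤ) ∣ a i)
    (hq2 : ¬ (q : ℤ)^2 ∣ a j₂)
    (hq3 : ∀ i, j₂ < i → i ≤ n → (q : ℤ)^k₂ ∣ a i)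
    (hq4 : ¬ (q : ℤ)^(k₂+1) ∣ a n)
    (hg1 : Nat.gcd (k₁ - 1) (n - j₁) = 1)
    (hg2 : Nat.gcd (k₂ - 1) (n - j₂) = 1) :
    Irreducible ((∑ i ∈ range (n+1), C (a i) * X ^ i).map (Int.castRingHom ℚ)) :=
  corollary_1_46_general n a han p q hp hq j₁ j₂ hj1 hj1n hj2 hj2n hjne hjsum k₁ k₂ hk1j hk2j hp0
    hp1 hp2 hp3 hp4 hq0 hq1 hq2 hq3 hq4 hg1 hg2
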